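/- Let η̃(x) := (π² − 4πx + 2x²)/16 and c_* := π/(2√2). Then for every x ∈ [0, 2π]: (1/4)·(c_*² − 2η̃(x)) − (1/π)·∫₀^{2π} (η̃'(s))² ds + (1/2)·η̃(x) − (1/4π)·∫₀^{2π} η̃(s) ds = 0. (Here ∫₀^{2π}(η̃'(s))² ds = π³/24 and ∫₀^{2π} η̃(s) ds = −π³/24.) This identity expresses that A η̃' = 0 away from the peak, i.e., the derivative of the peaked profile lies in the kernel of the linearized operator A in L². -/

import Mathlib

open Real MeasureTheory

/-- The limiting wave speed `c_* = π/(2√2)`. -/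
noncomputable def cStar : ℝ := π / (2 * Real.sqrt 2)

/-- The peaked periodic profile written on the period `[0, 2π]`
(peaks at the endpoints). -/
noncomputable def etaTilde (x : ℝ) : ℝ := (π ^ 2 - 4 * π * x + 2 * x ^ 2) / 16

/-! Both integrals are moments of `(s - π)²`, since `η̃` is a parabola centred at `π`;
in the pointwise identity the `η̃(x)` terms cancel, leaving a relation between constants. -/

lemma cStar_sq : cStar ^ 2 = π ^ 2 / 8 := by
  rw [cStar, div_pow, mul_pow, sq_sqrt zero_le_two]
  norm_num

lemma etaTilde_eq_sub_pi_sq (x : ℝ) : etaTilde x = (2 * (x - π) ^ 2 - π ^ 2) / 16 := by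
  rw [etaTilde]
  ring

lemma hasDerivAt_etaTilde (x : ℝ) : HasDerivAt etaTilde ((x - π) / 4) x := by
  have h := (((hasDerivAt_id' x).sub_const π).fun_pow 2 |>.const_mul 2
    |>.sub_const (π ^ 2)).div_const 16
  rw [funext etaTilde_eq_sub_pi_sq]
  exact h.congr_deriv (by norm_num; ring)

lemma deriv_etaTilde : deriv etaTilde = fun x => (x - π) / 4 :=
  funext fun x => (hasDerivAt_etaTilde x).deriv

lemma integral_sub_sq (a b c : ℝ) :
    ∫ s in a..b, (s - c) ^ 2 = ((b - c) ^ 3 - (a - c) ^ 3) / 3 := by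
  rw [intervalIntegral.integral_comp_sub_right (fun s => s ^ 2), integral_pow]
  norm_num

lemma integral_sub_pi_sq : ∫ s in (0:ℝ)..(2*π), (s - π) ^ 2 = 2 * π ^ 3 / 3 := by
  rw [integral_sub_sq]
  ring

lemma integral_deriv_etaTilde_sq :
    ∫ s in (0:ℝ)..(2*π), (deriv etaTilde s) ^ 2 = π ^ 3 / 24 := by
  simp only [deriv_etaTilde, div_pow]
  rw [intervalIntegral.integral_div, integral_sub_pi_sq]
  ring

lemma integral_etaTilde : ∫ s in (0:ℝ)..(2*π), etaTilde s = -(π ^ 3) / 24 := by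
  have hsq : IntervalIntegrable (fun s => 2 * (s - π) ^ 2) volume 0 (2 * π) := by
    apply Continuous.intervalIntegrable
    fun_prop
  simp only [etaTilde_eq_sub_pi_sq]
  rw [intervalIntegral.integral_div, intervalIntegral.integral_sub hsq intervalIntegrable_const,
    intervalIntegral.integral_const_mul, integral_sub_pi_sq, intervalIntegral.integral_const]
  simp only [sub_zero, smul_eq_mul]
  ring

/-- The identity expressing `A η̃' = 0` away from the peak: for every `x ∈ [0, 2π]`,
`(1/4)(c_*² − 2η̃(x)) − (1/π)∫₀^{2π}(η̃')² + (1/2)η̃(x) − (1/4π)∫₀^{2π}η̃ = 0`,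
together with the values `∫₀^{2π}(η̃')² = π³/24` and `∫₀^{2π}η̃ = −π³/24`. -/
theorem derivative_in_kernel_of_A :
    (∫ s in (0:ℝ)..(2*π), (deriv etaTilde s) ^ 2) = π ^ 3 / 24 ∧
    (∫ s in (0:ℝ)..(2*π), etaTilde s) = -(π ^ 3) / 24 ∧
    ∀ x ∈ Set.Icc (0:ℝ) (2 * π),
      (1/4) * (cStar ^ 2 - 2 * etaTilde x)
        - (1/π) * (∫ s in (0:ℝ)..(2*π), (deriv etaTilde s) ^ 2)
        + (1/2) * etaTilde x
        - (1/(4*π)) * (∫ s in (0:ℝ)..(2*π), etaTilde s) = 0 := by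
  refine ⟨integral_deriv_etaTilde_sq, integral_etaTilde, fun x _ => ?_⟩
  rw [integral_deriv_etaTilde_sq, integral_etaTilde, cStar_sq]
  field_simp [pi_ne_zero]
  ring
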